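/- arXiv:2409.15614 — 2 statements merged into one kernel-verified Lean document; each statement's English description precedes it below -/
import Mathlib

section
/- (Lemma 2.9.) Define the curvature of ∇^L by R^L(V,W)Z := ∇^L_V∇^L_W Z − ∇^L_W∇^L_V Z − ∇^L_{[V,W]}Z. Then at every point of the BCV space N: R^L(X₁,X₂)X₁ = (3τ²L − λ)X₂, R^L(X₁,X₂)X₂ = (λ − 3τ²L)X₁, R^L(X₁,X₂)X₃ = 0, R^L(X₁,X₃)X₁ = −τ²L·X₃, R^L(X₁,X₃)X₂ = 0, R^L(X₁,X₃)X₃ = τ²L²·X₁, R^L(X₂,X₃)X₁ = 0, R^L(X₂,X₃)X₂ = −τ²L·X₃, and R^L(X₂,X₃)X₃ = τ²L²·X₂. -/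
noncomputable section

open scoped BigOperators

/-- A point of `ℝ³`. -/
abbrev Pt : Type := Fin 3 → ℝ

/-- A vector field on (an open subset of) `ℝ³`, viewed as a map `ℝ³ → ℝ³`. -/
abbrev VF : Type := Pt → Pt

/-- `μ(x) = 1 + (λ/4)(x₁² + x₂²)`. -/
def mu (lam : ℝ) (x : Pt) : ℝ := 1 + lam / 4 * ((x 0) ^ 2 + (x 1) ^ 2)

/-- The frame field `X₁`. -/
def X1 (lam tau : ℝ) : VF := fun x => ![mu lam x, 0, -tau * x 1]

/-- The frame field `X₂`. -/
def X2 (lam tau : ℝ) : VF := fun x => ![0, mu lam x, tau * x 0]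

/-- The frame field `X₃`. -/
def X3 : VF := fun _ => ![0, 0, 1]

/-- The frame as a family indexed by `Fin 3`. -/
def Xf (lam tau : ℝ) : Fin 3 → VF := ![X1 lam tau, X2 lam tau, X3]

/-- Lie bracket of vector fields: `[V,W](x) = DW(x)(V(x)) − DV(x)(W(x))`. -/
def bracket (V W : VF) (x : Pt) : Pt := fderiv ℝ W x (V x) - fderiv ℝ V x (W x)

/-- The coframe `ω₁, ω₂, ω₃` evaluated at `x` on the tangent vector `v`. -/
def omf (lam tau : ℝ) (i : Fin 3) (x v : Pt) : ℝ :=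
  ![v 0 / mu lam x, v 1 / mu lam x,
    v 2 + tau * (x 1 * v 0 - x 0 * v 1) / mu lam x] i

/-- The metric `g_L(x)(v,w) = ω₁(v)ω₁(w) + ω₂(v)ω₂(w) + L·ω₃(v)ω₃(w)`. -/
def gL (lam tau L : ℝ) (x v w : Pt) : ℝ :=
  omf lam tau 0 x v * omf lam tau 0 x w + omf lam tau 1 x v * omf lam tau 1 x w
    + L * (omf lam tau 2 x v * omf lam tau 2 x w)

/-- The directional derivative `X(f)(x) = Df(x)(X(x))` of `f` along the vector field `X`. -/
def dd (X : VF) (f : Pt → ℝ) (x : Pt) : ℝ := fderiv ℝ f x (X x)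

/-- The connection table `(∇^L_{Xᵢ}Xⱼ)(x)` on the frame. -/
def nablaF (lam tau L : ℝ) (i j : Fin 3) (x : Pt) : Pt :=
  ![![(lam / 2 * x 1) • X2 lam tau x,
      (-(lam / 2) * x 1) • X1 lam tau x + tau • X3 x,
      (-(tau * L)) • X2 lam tau x],
    ![(-(lam / 2) * x 0) • X2 lam tau x - tau • X3 x,
      (lam / 2 * x 0) • X1 lam tau x,
      (tau * L) • X1 lam tau x],
    ![(-(tau * L)) • X2 lam tau x,
      (tau * L) • X1 lam tau x,
      (0 : Pt)]] i j

/-- The connection `∇^L` extended to general vector fields `V = Σᵢ vᵢXᵢ`, `W = Σⱼ wⱼXⱼ`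
(with `vᵢ = ωᵢ(V)`, `wⱼ = ωⱼ(W)`):
`∇^L_V W = Σᵢⱼ vᵢ·(Xᵢ(wⱼ)·Xⱼ + wⱼ·∇^L_{Xᵢ}Xⱼ)`. -/
def nabla (lam tau L : ℝ) (V W : VF) (x : Pt) : Pt :=
  ∑ i : Fin 3, ∑ j : Fin 3,
    omf lam tau i x (V x) •
      (dd (Xf lam tau i) (fun y => omf lam tau j y (W y)) x • Xf lam tau j x
        + omf lam tau j x (W x) • nablaF lam tau L i j x)

/-- The curvature `R^L(V,W)Z = ∇^L_V∇^L_W Z − ∇^L_W∇^L_V Z − ∇^L_{[V,W]}Z`. -/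
def RL (lam tau L : ℝ) (V W Z : VF) (x : Pt) : Pt :=
  nabla lam tau L V (nabla lam tau L W Z) x - nabla lam tau L W (nabla lam tau L V Z) x
    - nabla lam tau L (bracket V W) Z x

/-- `p = X₁u`. -/
def pf (lam tau : ℝ) (u : Pt → ℝ) (x : Pt) : ℝ := dd (X1 lam tau) u x

/-- `q = X₂u`. -/
def qf (lam tau : ℝ) (u : Pt → ℝ) (x : Pt) : ℝ := dd (X2 lam tau) u x

/-- `X₃u`. -/
def X3u (u : Pt → ℝ) (x : Pt) : ℝ := dd X3 u x

/-- `l = √(p² + q²)`. -/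
def lf (lam tau : ℝ) (u : Pt → ℝ) (x : Pt) : ℝ :=
  Real.sqrt (pf lam tau u x ^ 2 + qf lam tau u x ^ 2)

/-- `X̃₃ = L^{-1/2} X₃`. -/
def X3t (L : ℝ) : VF := fun x => (Real.sqrt L)⁻¹ • X3 x

/-- `r = X̃₃u = L^{-1/2} X₃u`. -/
def rf (L : ℝ) (u : Pt → ℝ) (x : Pt) : ℝ := (Real.sqrt L)⁻¹ * X3u u x

/-- `l_L = √(p² + q² + r²)`. -/
def lL (lam tau L : ℝ) (u : Pt → ℝ) (x : Pt) : ℝ :=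
  Real.sqrt (pf lam tau u x ^ 2 + qf lam tau u x ^ 2 + rf L u x ^ 2)

/-- `p̄ = p/l`. -/
def pbar (lam tau : ℝ) (u : Pt → ℝ) (x : Pt) : ℝ := pf lam tau u x / lf lam tau u x

/-- `q̄ = q/l`. -/
def qbar (lam tau : ℝ) (u : Pt → ℝ) (x : Pt) : ℝ := qf lam tau u x / lf lam tau u x

/-- `p̄_L = p/l_L`. -/
def pbarL (lam tau L : ℝ) (u : Pt → ℝ) (x : Pt) : ℝ := pf lam tau u x / lL lam tau L u x

/-- `q̄_L = q/l_L`. -/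
def qbarL (lam tau L : ℝ) (u : Pt → ℝ) (x : Pt) : ℝ := qf lam tau u x / lL lam tau L u x

/-- `r̄_L = r/l_L`. -/
def rbarL (lam tau L : ℝ) (u : Pt → ℝ) (x : Pt) : ℝ := rf L u x / lL lam tau L u x

/-- The Riemannian unit normal `ν_L = p̄_L X₁ + q̄_L X₂ + r̄_L X̃₃`. -/
def nuL (lam tau L : ℝ) (u : Pt → ℝ) : VF := fun x =>
  pbarL lam tau L u x • X1 lam tau x + qbarL lam tau L u x • X2 lam tau x
    + rbarL lam tau L u x • X3t L x

/-- The tangent frame field `ē₁ = q̄X₁ − p̄X₂`. -/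
def e1 (lam tau : ℝ) (u : Pt → ℝ) : VF := fun x =>
  qbar lam tau u x • X1 lam tau x - pbar lam tau u x • X2 lam tau x

/-- The tangent frame field `ē₂ = r̄_L p̄ X₁ + r̄_L q̄ X₂ − (l/l_L)X̃₃`. -/
def e2 (lam tau L : ℝ) (u : Pt → ℝ) : VF := fun x =>
  (rbarL lam tau L u x * pbar lam tau u x) • X1 lam tau x
    + (rbarL lam tau L u x * qbar lam tau u x) • X2 lam tau x
    - (lf lam tau u x / lL lam tau L u x) • X3t L x

/-!
The connection is given through the coframe `ω`, dual to the frame `Xᵢ`, so `∇^L_V W` is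
`ω(V)`-linear in `V` and obeys the Leibniz rule for `W = Σₖ wₖ Xₖ`. Writing
`∇^L_{Xₐ}X_b = Σₖ Γ_{ab}^k Xₖ` and `[Xₐ, X_b] = Σᵢ c_{ab}^i Xᵢ`, this gives
`R^L(Xₐ,X_b)X_c = Σₖ (Xₐ(Γ_{bc}^k) − X_b(Γ_{ac}^k)) Xₖ + Γ_{bc}^k ∇^L_{Xₐ}Xₖ − Γ_{ac}^k ∇^L_{X_b}Xₖ
  − Σᵢ c_{ab}^i ∇^L_{Xᵢ}X_c`.
The only nonzero structure functions come from `[X₁,X₂] = −(λ/2)x₂X₁ + (λ/2)x₁X₂ + 2τX₃`, and the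
Christoffel symbols are constants or multiples of `x₁, x₂`, so each of the nine identities
reduces to a polynomial identity in `x₁, x₂, λ, τ, L`.
-/

open Filter Topology

variable (lam tau L : ℝ) {y : Pt}

lemma eventually_mu_pos (hy : 0 < mu lam y) : ∀ᶠ z in 𝓝 y, 0 < mu lam z :=
  (show Continuous (mu lam) by unfold mu; fun_prop).continuousAt.eventually (eventually_gt_nhds hy)

lemma omf_sum_smul_Xf (hy : mu lam y ≠ 0) (v : Fin 3 → ℝ) (j : Fin 3) :
    omf lam tau j y (∑ k, v k • Xf lam tau k y) = v j := by
  fin_cases j <;> simp [omf, Xf, X1, X2, X3, Fin.sum_univ_three, hy]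
  field_simp
  ring

lemma Xf_eq_sum (i : Fin 3) (y : Pt) :
    Xf lam tau i y = ∑ k, (if i = k then (1 : ℝ) else 0) • Xf lam tau k y := by
  simp

lemma omf_Xf (hy : mu lam y ≠ 0) (i j : Fin 3) :
    omf lam tau j y (Xf lam tau i y) = if i = j then 1 else 0 := by
  rw [Xf_eq_sum, omf_sum_smul_Xf lam tau hy]

lemma dd_congr {f g : Pt → ℝ} (h : f =ᶠ[𝓝 y] g) (X : VF) : dd X f y = dd X g y := by
  rw [dd, dd, h.fderiv_eq]

@[simp] lemma dd_const (X : VF) (c : ℝ) : dd X (fun _ => c) y = 0 := by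
  simp [dd]

@[simp] lemma dd_const_mul_apply (X : VF) (c : ℝ) (k : Fin 3) :
    dd X (fun z => c * z k) y = c * X y k := by
  have h : HasFDerivAt (fun z : Pt => c * z k) (c • ContinuousLinearMap.proj k) y :=
    (ContinuousLinearMap.proj k : Pt →L[ℝ] ℝ).hasFDerivAt.const_mul c
  rw [dd, h.fderiv]
  simp

lemma nabla_Xf_left (hy : mu lam y ≠ 0) (a : Fin 3) (W : VF) :
    nabla lam tau L (Xf lam tau a) W y
      = ∑ j, (dd (Xf lam tau a) (fun z => omf lam tau j z (W z)) y • Xf lam tau j y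
        + omf lam tau j y (W y) • nablaF lam tau L a j y) := by
  simp only [nabla, omf_Xf lam tau hy, ite_smul, one_smul, zero_smul, Finset.sum_ite_irrel,
    Finset.sum_const_zero, Fintype.sum_ite_eq]

lemma nabla_eq_sum_omf_smul (hy : mu lam y ≠ 0) (V W : VF) :
    nabla lam tau L V W y = ∑ i, omf lam tau i y (V y) • nabla lam tau L (Xf lam tau i) W y := by
  conv_lhs => rw [nabla]
  simp only [nabla_Xf_left lam tau L hy, Finset.smul_sum]

lemma nabla_Xf_of_eventuallyEq (hy : 0 < mu lam y) (a : Fin 3) {W : VF} {w : Fin 3 → Pt → ℝ}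
    (hW : W =ᶠ[𝓝 y] fun z => ∑ k, w k z • Xf lam tau k z) :
    nabla lam tau L (Xf lam tau a) W y
      = ∑ k, (dd (Xf lam tau a) (w k) y • Xf lam tau k y + w k y • nablaF lam tau L a k y) := by
  have hw : ∀ k, (fun z => omf lam tau k z (W z)) =ᶠ[𝓝 y] w k := fun k =>
    (hW.and (eventually_mu_pos lam hy)).mono fun z ⟨hz, hμ⟩ => by
      simp only [hz, omf_sum_smul_Xf lam tau hμ.ne']
  rw [nabla_Xf_left lam tau L hy.ne']
  refine Finset.sum_congr rfl fun k _ => ?_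
  rw [dd_congr (hw k)]
  congr 2
  exact (hw k).self_of_nhds

lemma nabla_Xf_Xf (hy : 0 < mu lam y) (a b : Fin 3) :
    nabla lam tau L (Xf lam tau a) (Xf lam tau b) y = nablaF lam tau L a b y := by
  rw [nabla_Xf_of_eventuallyEq lam tau L hy a (w := fun k _ => if b = k then 1 else 0)
    (Eventually.of_forall fun z => Xf_eq_sum lam tau b z)]
  simp

/-- The Christoffel symbols `Γ_{ab}^k` of `∇^L` in the frame. -/
def connCoeff : Fin 3 → Fin 3 → Fin 3 → Pt → ℝ :=
  ![![![fun _ => 0, fun z => lam / 2 * z 1, fun _ => 0],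
      ![fun z => -(lam / 2) * z 1, fun _ => 0, fun _ => tau],
      ![fun _ => 0, fun _ => -(tau * L), fun _ => 0]],
    ![![fun _ => 0, fun z => -(lam / 2) * z 0, fun _ => -tau],
      ![fun z => lam / 2 * z 0, fun _ => 0, fun _ => 0],
      ![fun _ => tau * L, fun _ => 0, fun _ => 0]],
    ![![fun _ => 0, fun _ => -(tau * L), fun _ => 0],
      ![fun _ => tau * L, fun _ => 0, fun _ => 0],
      ![fun _ => 0, fun _ => 0, fun _ => 0]]]

lemma nablaF_eq_sum (a b : Fin 3) (z : Pt) :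
    nablaF lam tau L a b z = ∑ k, connCoeff lam tau L a b k z • Xf lam tau k z := by
  fin_cases a <;> fin_cases b <;> ext m <;> fin_cases m <;>
    simp [nablaF, connCoeff, Xf, X1, X2, X3, Fin.sum_univ_three, sub_eq_add_neg]

lemma nabla_Xf_nabla_Xf_Xf (hy : 0 < mu lam y) (a b c : Fin 3) :
    nabla lam tau L (Xf lam tau a) (nabla lam tau L (Xf lam tau b) (Xf lam tau c)) y
      = ∑ k, (dd (Xf lam tau a) (connCoeff lam tau L b c k) y • Xf lam tau k y
        + connCoeff lam tau L b c k y • nablaF lam tau L a k y) :=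
  nabla_Xf_of_eventuallyEq lam tau L hy a <| (eventually_mu_pos lam hy).mono fun z hz => by
    rw [nabla_Xf_Xf lam tau L hz, nablaF_eq_sum]

/-- The structure functions `c_{ab}^k` of the frame. -/
def bracketCoeff : Fin 3 → Fin 3 → Fin 3 → Pt → ℝ :=
  ![![fun _ _ => 0, ![fun z => -(lam / 2) * z 1, fun z => lam / 2 * z 0, fun _ => 2 * tau],
      fun _ _ => 0],
    ![![fun z => lam / 2 * z 1, fun z => -(lam / 2) * z 0, fun _ => -(2 * tau)],
      fun _ _ => 0, fun _ _ => 0],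
    ![fun _ _ => 0, fun _ _ => 0, fun _ _ => 0]]

def muDeriv (y : Pt) : Pt →L[ℝ] ℝ :=
  (lam / 2 * y 0) • ContinuousLinearMap.proj 0 + (lam / 2 * y 1) • ContinuousLinearMap.proj 1

lemma hasFDerivAt_mu (y : Pt) : HasFDerivAt (mu lam) (muDeriv lam y) y := by
  have h := fun k : Fin 3 => (ContinuousLinearMap.proj k : Pt →L[ℝ] ℝ).hasFDerivAt (x := y)
  refine ((((h 0).pow 2).add ((h 1).pow 2)).const_mul (lam / 4)).const_add 1 |>.congr_fderiv ?_
  ext v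
  simp [muDeriv]
  ring

def XfDeriv (a : Fin 3) (y : Pt) : Pt →L[ℝ] Pt :=
  ![ContinuousLinearMap.pi ![muDeriv lam y, 0, (-tau) • ContinuousLinearMap.proj 1],
    ContinuousLinearMap.pi ![0, muDeriv lam y, tau • ContinuousLinearMap.proj 0],
    0] a

lemma hasFDerivAt_Xf (a : Fin 3) (y : Pt) :
    HasFDerivAt (Xf lam tau a) (XfDeriv lam tau a y) y := by
  have hproj := fun (k : Fin 3) (c : ℝ) =>
    (ContinuousLinearMap.proj k : Pt →L[ℝ] ℝ).hasFDerivAt.const_mul c (x := y)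
  fin_cases a
  · refine hasFDerivAt_pi'' fun i => ?_
    fin_cases i
    · exact hasFDerivAt_mu lam y
    · exact hasFDerivAt_const (0 : ℝ) y
    · exact hproj 1 (-tau)
  · refine hasFDerivAt_pi'' fun i => ?_
    fin_cases i
    · exact hasFDerivAt_const (0 : ℝ) y
    · exact hasFDerivAt_mu lam y
    · exact hproj 0 tau
  · exact hasFDerivAt_const _ y

lemma bracket_Xf (a b : Fin 3) (y : Pt) :
    bracket (Xf lam tau a) (Xf lam tau b) y
      = ∑ k, bracketCoeff lam tau a b k y • Xf lam tau k y := by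
  rw [bracket, (hasFDerivAt_Xf lam tau a y).fderiv, (hasFDerivAt_Xf lam tau b y).fderiv]
  fin_cases a <;> fin_cases b <;> ext m <;> fin_cases m <;>
    simp [XfDeriv, muDeriv, bracketCoeff, Xf, X1, X2, X3, mu, Fin.sum_univ_three] <;> ring

lemma nabla_bracket_Xf (hy : 0 < mu lam y) (a b c : Fin 3) :
    nabla lam tau L (bracket (Xf lam tau a) (Xf lam tau b)) (Xf lam tau c) y
      = ∑ i, bracketCoeff lam tau a b i y • nablaF lam tau L i c y := by
  rw [nabla_eq_sum_omf_smul lam tau L hy.ne']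
  simp only [bracket_Xf, omf_sum_smul_Xf lam tau hy.ne', nabla_Xf_Xf lam tau L hy]

lemma RL_Xf (hy : 0 < mu lam y) (a b c : Fin 3) :
    RL lam tau L (Xf lam tau a) (Xf lam tau b) (Xf lam tau c) y
      = ∑ k, (dd (Xf lam tau a) (connCoeff lam tau L b c k) y • Xf lam tau k y
          + connCoeff lam tau L b c k y • nablaF lam tau L a k y)
        - ∑ k, (dd (Xf lam tau b) (connCoeff lam tau L a c k) y • Xf lam tau k y
          + connCoeff lam tau L a c k y • nablaF lam tau L b k y)
        - ∑ i, bracketCoeff lam tau a b i y • nablaF lam tau L i c y := by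
  rw [RL, nabla_Xf_nabla_Xf_Xf lam tau L hy, nabla_Xf_nabla_Xf_Xf lam tau L hy,
    nabla_bracket_Xf lam tau L hy]

theorem statement4_general (lam tau : ℝ) (L : ℝ) (x : Pt)
    (hx : 0 < mu lam x) :
    RL lam tau L (X1 lam tau) (X2 lam tau) (X1 lam tau) x
        = (3 * tau ^ 2 * L - lam) • X2 lam tau x ∧
    RL lam tau L (X1 lam tau) (X2 lam tau) (X2 lam tau) x
        = (lam - 3 * tau ^ 2 * L) • X1 lam tau x ∧
    RL lam tau L (X1 lam tau) (X2 lam tau) X3 x = 0 ∧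
    RL lam tau L (X1 lam tau) X3 (X1 lam tau) x = (-(tau ^ 2 * L)) • X3 x ∧
    RL lam tau L (X1 lam tau) X3 (X2 lam tau) x = 0 ∧
    RL lam tau L (X1 lam tau) X3 X3 x = (tau ^ 2 * L ^ 2) • X1 lam tau x ∧
    RL lam tau L (X2 lam tau) X3 (X1 lam tau) x = 0 ∧
    RL lam tau L (X2 lam tau) X3 (X2 lam tau) x = (-(tau ^ 2 * L)) • X3 x ∧
    RL lam tau L (X2 lam tau) X3 X3 x = (tau ^ 2 * L ^ 2) • X2 lam tau x := by
  have R := RL_Xf lam tau L hx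
  refine ⟨(R 0 1 0).trans ?_, (R 0 1 1).trans ?_, (R 0 1 2).trans ?_, (R 0 2 0).trans ?_,
    (R 0 2 1).trans ?_, (R 0 2 2).trans ?_, (R 1 2 0).trans ?_, (R 1 2 1).trans ?_,
    (R 1 2 2).trans ?_⟩ <;>
  · -- differentiate the Christoffel symbols before `simp` rewrites their bodies out of `c * z k` form
    simp only [Fin.sum_univ_three, connCoeff, bracketCoeff, Matrix.cons_val, dd_const,
      dd_const_mul_apply]
    ext m
    fin_cases m <;>
      simp [nablaF, Xf, X1, X2, X3, mu] <;> ring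

/-- Lemma 2.9: curvature of `∇^L` on the frame. -/
theorem statement4 (lam tau : ℝ) (htau : 0 < tau) (L : ℝ) (hL : 0 < L) (x : Pt)
    (hx : 0 < mu lam x) :
    RL lam tau L (X1 lam tau) (X2 lam tau) (X1 lam tau) x
        = (3 * tau ^ 2 * L - lam) • X2 lam tau x ∧
    RL lam tau L (X1 lam tau) (X2 lam tau) (X2 lam tau) x
        = (lam - 3 * tau ^ 2 * L) • X1 lam tau x ∧
    RL lam tau L (X1 lam tau) (X2 lam tau) X3 x = 0 ∧
    RL lam tau L (X1 lam tau) X3 (X1 lam tau) x = (-(tau ^ 2 * L)) • X3 x ∧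
    RL lam tau L (X1 lam tau) X3 (X2 lam tau) x = 0 ∧
    RL lam tau L (X1 lam tau) X3 X3 x = (tau ^ 2 * L ^ 2) • X1 lam tau x ∧
    RL lam tau L (X2 lam tau) X3 (X1 lam tau) x = 0 ∧
    RL lam tau L (X2 lam tau) X3 (X2 lam tau) x = (-(tau ^ 2 * L)) • X3 x ∧
    RL lam tau L (X2 lam tau) X3 X3 x = (tau ^ 2 * L ^ 2) • X2 lam tau x :=
  statement4_general lam tau L x hx
end
end

section
/- (Proposition 2.8.) Let u : N → ℝ be C²-smooth and x ∈ N a noncharacteristic point. Define the Riemannian mean curvature 𝓗_L(x) := h₁₁(x) + h₂₂(x), where h₁₁ = (l/l_L)[X₁(p̄) + X₂(q̄)] − (λ/2)(p̄_L x₁ + q̄_L x₂) and h₂₂ = −(l²/l_L²)·(r̄_L p̄·X₁(r/l) + r̄_L q̄·X₂(r/l)) + X̃₃(r̄_L) + (p̄_L − q̄_L)·p̄·q̄·r̄_L²·(λ/2)x₂ (all quantities depending on L). Then, as L → ∞ along (0,∞), 𝓗_L(x) tends to the horizontal mean curvature 𝓗_∞(x) = X₁(p̄)(x) + X₂(q̄)(x)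 − (λ/2)(p̄(x)·x₁ + q̄(x)·x₂). -/
/-!
Put `t = L^{-1/2}`, so that `r = t·X₃u → 0`. Then `l_L → l ≠ 0`, `p̄_L → p̄`, `q̄_L → q̄` and
`r̄_L → 0`, which gives `h₁₁ → 𝓗_∞`. In `h₂₂` every term carries a factor tending to zero:
`X_i(r/l) = t·X_i(X₃u/l)` and `X̃₃(r̄_L) = t²·X₃(X₃u/l_L)`, where `X₃(X₃u/l_L)(x)` converges as
`t → 0` because `(t, y) ↦ X₃u(y)/√(p(y)² + q(y)² + t²X₃u(y)²)` is `C¹` near `(0, x)`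
(`u` is `C²` and `l(x) ≠ 0`). Hence `h₂₂ → 0`.
-/

noncomputable section

open scoped BigOperators

open Filter Topology

lemma contDiff_X1 {n : WithTop ℕ∞} (lam tau : ℝ) : ContDiff ℝ n (X1 lam tau) := by
  refine contDiff_pi.2 fun i => ?_
  fin_cases i <;> simp [X1, mu] <;> fun_prop

lemma contDiff_X2 {n : WithTop ℕ∞} (lam tau : ℝ) : ContDiff ℝ n (X2 lam tau) := by
  refine contDiff_pi.2 fun i => ?_
  fin_cases i <;> simp [X2, mu] <;> fun_prop

lemma contDiff_X3 {n : WithTop ℕ∞} : ContDiff ℝ n X3 := contDiff_const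

lemma contDiff_dd {n : WithTop ℕ∞} {X : VF} {f : Pt → ℝ} (hf : ContDiff ℝ (n + 1) f)
    (hX : ContDiff ℝ n X) : ContDiff ℝ n (dd X f) :=
  (hf.fderiv_right le_rfl).clm_apply hX

lemma dd_const_mul (X : VF) (c : ℝ) (f : Pt → ℝ) (x : Pt) :
    dd X (fun y => c * f y) x = c * dd X f x := by
  change fderiv ℝ (c • f) x (X x) = _
  rw [fderiv_const_smul_field]
  rfl

lemma dd_X3t (L : ℝ) (f : Pt → ℝ) (x : Pt) : dd (X3t L) f x = (√L)⁻¹ * dd X3 f x :=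
  (fderiv ℝ f x).map_smul _ _

lemma continuousAt_dd_of_contDiffAt {F : ℝ → Pt → ℝ} {t₀ : ℝ} {x : Pt} (X : VF)
    (hF : ContDiffAt ℝ 1 (Function.uncurry F) (t₀, x)) :
    ContinuousAt (fun t => dd X (F t) x) t₀ :=
  ((hF.fderiv (m := 0) (g := fun _ => x) contDiffAt_const (by norm_num)).continuousAt).clm_apply
    continuousAt_const

lemma tendsto_inv_sqrt_atTop : Tendsto (fun L : ℝ => (√L)⁻¹) atTop (𝓝 0) :=
  tendsto_inv_atTop_zero.comp Real.tendsto_sqrt_atTop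

section Limits

variable {lam tau : ℝ} {u : Pt → ℝ} {x : Pt}

lemma tendsto_rf (u : Pt → ℝ) (x : Pt) : Tendsto (fun L => rf L u x) atTop (𝓝 0) := by
  have h := tendsto_inv_sqrt_atTop.mul_const (X3u u x)
  rwa [zero_mul] at h

lemma tendsto_lL (lam tau : ℝ) (u : Pt → ℝ) (x : Pt) :
    Tendsto (fun L => lL lam tau L u x) atTop (𝓝 (lf lam tau u x)) := by
  have h := (((tendsto_rf u x).pow 2).const_add
    (pf lam tau u x ^ 2 + qf lam tau u x ^ 2)).sqrt
  rwa [zero_pow two_ne_zero, add_zero] at h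

lemma tendsto_dd_rf_div_lf (lam tau : ℝ) (u : Pt → ℝ) (x : Pt) (X : VF) :
    Tendsto (fun L => dd X (fun y => rf L u y / lf lam tau u y) x) atTop (𝓝 0) := by
  have h := tendsto_inv_sqrt_atTop.mul_const (dd X (fun y => X3u u y / lf lam tau u y) x)
  rw [zero_mul] at h
  refine h.congr fun L => ?_
  rw [← dd_const_mul]
  simp only [rf, mul_div_assoc]

lemma tendsto_pbarL (hnc : lf lam tau u x ≠ 0) :
    Tendsto (fun L => pbarL lam tau L u x) atTop (𝓝 (pbar lam tau u x)) :=
  tendsto_const_nhds.div (tendsto_lL lam tau u x) hnc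

lemma tendsto_qbarL (hnc : lf lam tau u x ≠ 0) :
    Tendsto (fun L => qbarL lam tau L u x) atTop (𝓝 (qbar lam tau u x)) :=
  tendsto_const_nhds.div (tendsto_lL lam tau u x) hnc

lemma tendsto_rbarL (hnc : lf lam tau u x ≠ 0) :
    Tendsto (fun L => rbarL lam tau L u x) atTop (𝓝 0) := by
  have h := (tendsto_rf u x).div (tendsto_lL lam tau u x) hnc
  rwa [zero_div] at h

lemma contDiffAt_X3u_div_lL_family (hu : ContDiff ℝ 2 u) (hnc : lf lam tau u x ≠ 0) :
    ContDiffAt ℝ 1 (fun z : ℝ × Pt => X3u u z.2 /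
      √(pf lam tau u z.2 ^ 2 + qf lam tau u z.2 ^ 2 + (z.1 * X3u u z.2) ^ 2)) (0, x) := by
  have hp : ContDiff ℝ 1 (pf lam tau u) := contDiff_dd hu (contDiff_X1 lam tau)
  have hq : ContDiff ℝ 1 (qf lam tau u) := contDiff_dd hu (contDiff_X2 lam tau)
  have hr : ContDiff ℝ 1 (X3u u) := contDiff_dd hu contDiff_X3
  have hpos : 0 < pf lam tau u x ^ 2 + qf lam tau u x ^ 2 := Real.sqrt_ne_zero'.mp hnc
  have hsqrt := (((hp.comp contDiff_snd).pow 2).add ((hq.comp contDiff_snd).pow 2) |>.add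
    ((contDiff_fst.mul (hr.comp contDiff_snd)).pow 2)).contDiffAt (x := ((0 : ℝ), x)).sqrt
    (by simp [hpos.ne'])
  exact (hr.comp contDiff_snd).contDiffAt.div hsqrt (by simpa [lf] using hnc)

lemma rbarL_eq_inv_sqrt_mul (L : ℝ) :
    rbarL lam tau L u = fun y => (√L)⁻¹ * (X3u u y / lL lam tau L u y) := by
  funext y
  exact mul_div_assoc _ _ _

lemma tendsto_dd_X3t_rbarL (hu : ContDiff ℝ 2 u) (hnc : lf lam tau u x ≠ 0) :
    Tendsto (fun L => dd (X3t L) (rbarL lam tau L u) x) atTop (𝓝 0) := by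
  have hcont := continuousAt_dd_of_contDiffAt (F := fun t y => X3u u y /
    √(pf lam tau u y ^ 2 + qf lam tau u y ^ 2 + (t * X3u u y) ^ 2)) X3
    (contDiffAt_X3u_div_lL_family hu hnc)
  have h := tendsto_inv_sqrt_atTop.mul
    (tendsto_inv_sqrt_atTop.mul (hcont.tendsto.comp tendsto_inv_sqrt_atTop))
  rw [zero_mul] at h
  refine h.congr fun L => ?_
  rw [dd_X3t, rbarL_eq_inv_sqrt_mul, dd_const_mul]
  rfl

/-- `h₁₁` and `h₂₂` are the diagonal entries of the second fundamental form of the level sets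
of `u` for `g_L` in the frame `ē₁, ē₂`; their sum is the Riemannian mean curvature `𝓗_L`. -/
def secondFundFormH11 (lam tau L : ℝ) (u : Pt → ℝ) (x : Pt) : ℝ :=
  lf lam tau u x / lL lam tau L u x *
      (dd (X1 lam tau) (pbar lam tau u) x + dd (X2 lam tau) (qbar lam tau u) x)
    - lam / 2 * (pbarL lam tau L u x * x 0 + qbarL lam tau L u x * x 1)

def secondFundFormH22 (lam tau L : ℝ) (u : Pt → ℝ) (x : Pt) : ℝ :=
  -(lf lam tau u x ^ 2 / lL lam tau L u x ^ 2) *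
      (rbarL lam tau L u x * pbar lam tau u x *
          dd (X1 lam tau) (fun y => rf L u y / lf lam tau u y) x
        + rbarL lam tau L u x * qbar lam tau u x *
          dd (X2 lam tau) (fun y => rf L u y / lf lam tau u y) x)
    + dd (X3t L) (rbarL lam tau L u) x
    + (pbarL lam tau L u x - qbarL lam tau L u x) * pbar lam tau u x *
        qbar lam tau u x * rbarL lam tau L u x ^ 2 * (lam / 2) * x 1

def horizontalMeanCurvature (lam tau : ℝ) (u : Pt → ℝ) (x : Pt) : ℝ :=
  dd (X1 lam tau) (pbar lam tau u) x + dd (X2 lam tau) (qbar lam tau u) x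
    - lam / 2 * (pbar lam tau u x * x 0 + qbar lam tau u x * x 1)

lemma tendsto_secondFundFormH11 (hnc : lf lam tau u x ≠ 0) :
    Tendsto (fun L => secondFundFormH11 lam tau L u x) atTop
      (𝓝 (horizontalMeanCurvature lam tau u x)) := by
  have h := (((tendsto_const_nhds (x := lf lam tau u x)).div (tendsto_lL lam tau u x) hnc).mul_const
      (dd (X1 lam tau) (pbar lam tau u) x + dd (X2 lam tau) (qbar lam tau u) x)).sub
    ((((tendsto_pbarL hnc).mul_const (x 0)).add ((tendsto_qbarL hnc).mul_const (x 1))).const_mul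
      (lam / 2))
  rwa [div_self hnc, one_mul] at h

lemma tendsto_secondFundFormH22 (hu : ContDiff ℝ 2 u) (hnc : lf lam tau u x ≠ 0) :
    Tendsto (fun L => secondFundFormH22 lam tau L u x) atTop (𝓝 0) := by
  have hr := tendsto_rbarL hnc
  have h := ((((tendsto_const_nhds (x := lf lam tau u x ^ 2)).div
      ((tendsto_lL lam tau u x).pow 2) (pow_ne_zero 2 hnc)).neg.mul
    (((hr.mul_const (pbar lam tau u x)).mul (tendsto_dd_rf_div_lf lam tau u x (X1 lam tau))).add
      ((hr.mul_const (qbar lam tau u x)).mul (tendsto_dd_rf_div_lf lam tau u x (X2 lam tau))))).add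
    (tendsto_dd_X3t_rbarL hu hnc)).add
    (((((((tendsto_pbarL hnc).sub (tendsto_qbarL hnc)).mul_const (pbar lam tau u x)).mul_const
      (qbar lam tau u x)).mul (hr.pow 2)).mul_const (lam / 2)).mul_const (x 1))
  simp only [mul_zero, zero_mul, add_zero, zero_pow two_ne_zero] at h
  exact h

end Limits

theorem statement7_general (lam tau : ℝ)
    (u : Pt → ℝ) (hu : ContDiff ℝ 2 u) (x : Pt)
    (hnc : lf lam tau u x ≠ 0) :
    Filter.Tendsto (fun L : ℝ =>
        (lf lam tau u x / lL lam tau L u x *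
            (dd (X1 lam tau) (pbar lam tau u) x + dd (X2 lam tau) (qbar lam tau u) x)
          - lam / 2 * (pbarL lam tau L u x * x 0 + qbarL lam tau L u x * x 1))
        + (-(lf lam tau u x ^ 2 / lL lam tau L u x ^ 2) *
              (rbarL lam tau L u x * pbar lam tau u x *
                  dd (X1 lam tau) (fun y => rf L u y / lf lam tau u y) x
                + rbarL lam tau L u x * qbar lam tau u x *
                  dd (X2 lam tau) (fun y => rf L u y / lf lam tau u y) x)
            + dd (X3t L) (rbarL lam tau L u) x
            + (pbarL lam tau L u x - qbarL lam tau L u x) * pbar lam tau u x *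
                qbar lam tau u x * rbarL lam tau L u x ^ 2 * (lam / 2) * x 1))
      Filter.atTop
      (nhds (dd (X1 lam tau) (pbar lam tau u) x + dd (X2 lam tau) (qbar lam tau u) x
        - lam / 2 * (pbar lam tau u x * x 0 + qbar lam tau u x * x 1))) := by
  have h := (tendsto_secondFundFormH11 hnc).add (tendsto_secondFundFormH22 hu hnc)
  rw [add_zero] at h
  exact h

/-- Proposition 2.8: the Riemannian mean curvature `𝓗_L = h₁₁ + h₂₂`
tends to the horizontal mean curvature `𝓗_∞` as `L → ∞`. -/
theorem statement7 (lam tau : ℝ) (htau : 0 < tau)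
    (u : Pt → ℝ) (hu : ContDiff ℝ 2 u) (x : Pt) (hx : 0 < mu lam x)
    (hnc : lf lam tau u x ≠ 0) :
    Filter.Tendsto (fun L : ℝ =>
        (lf lam tau u x / lL lam tau L u x *
            (dd (X1 lam tau) (pbar lam tau u) x + dd (X2 lam tau) (qbar lam tau u) x)
          - lam / 2 * (pbarL lam tau L u x * x 0 + qbarL lam tau L u x * x 1))
        + (-(lf lam tau u x ^ 2 / lL lam tau L u x ^ 2) *
              (rbarL lam tau L u x * pbar lam tau u x *
                  dd (X1 lam tau) (fun y => rf L u y / lf lam tau u y) x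
                + rbarL lam tau L u x * qbar lam tau u x *
                  dd (X2 lam tau) (fun y => rf L u y / lf lam tau u y) x)
            + dd (X3t L) (rbarL lam tau L u) x
            + (pbarL lam tau L u x - qbarL lam tau L u x) * pbar lam tau u x *
                qbar lam tau u x * rbarL lam tau L u x ^ 2 * (lam / 2) * x 1))
      Filter.atTop
      (nhds (dd (X1 lam tau) (pbar lam tau u) x + dd (X2 lam tau) (qbar lam tau u) x
        - lam / 2 * (pbar lam tau u x * x 0 + qbar lam tau u x * x 1))) :=
  statement7_general lam tau u hu x hnc
end
end
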